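/- Let k be a commutative ring and let (V,B) be a finite graph. Then Σ_{f : V → {1,2,3,...}, B ⊆ Eqs f} x_f = p_{λ(V,B)} in k[[x_1,x_2,x_3,...]], where x_f denotes the monomial Π_{v∈V} x_{f(v)}. -/

import Mathlib

open scoped Classical

noncomputable section

/-- The `n`-th power sum symmetric function `p_n = ∑_{j ≥ 1} x_j^n` (with `p_0 = 1`),
as a multivariate power series over `k` in variables indexed by positive integers. -/
def powerSum (k : Type*) [CommRing k] (n : ℕ) : MvPowerSeries ℕ+ k :=
  fun d => if ∃ j : ℕ+, d = Finsupp.single j n then 1 else 0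

/-- The exponent vector of the monomial `x_f = ∏_{v ∈ V} x_{f v}` attached to a
coloring `f : V → ℕ+`. -/
def colorMonomial {V : Type*} [Fintype V] (f : V → ℕ+) : ℕ+ →₀ ℕ :=
  ∑ v : V, Finsupp.single (f v) 1

/-- `p_{λ(V,B)}`: the product of `p_{|c|}` over all connected components `c` of the
graph `(V, B)`. -/
def pLambda (k : Type*) [CommRing k] {V : Type*} (B : Finset (Sym2 V)) :
    MvPowerSeries ℕ+ k :=
  ∏ᶠ c : (SimpleGraph.fromEdgeSet (↑B : Set (Sym2 V))).ConnectedComponent,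
    powerSum k (Nat.card c.supp)

/-- `Eqs f`: the set of all 2-element subsets `{u, w}` of `V` with `u ≠ w` and
`f u = f w`. -/
def Eqs {V Y : Type*} [Fintype V] [DecidableEq V] (f : V → Y) : Finset (Sym2 V) :=
  Finset.univ.filter fun e => ∃ u w : V, u ≠ w ∧ f u = f w ∧ e = s(u, w)

/-!
Since `B` has no loops, `B ⊆ Eqs f` says that `f` is constant along the edges of the graph,
i.e. that `f = g ∘ π` for the map `π` sending a vertex to its connected component and some
coloring `g` of the components. Then `x_f = ∏_c x_{g c}^{|c|}`, and counting the colorings `g`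
by this monomial is exactly extracting a coefficient of `∏_c p_{|c|}`: as every `|c|` is
positive, `g` is recovered from the factors `x_{g c}^{|c|}`.
-/

open Finset Finsupp

section Eqs

variable {V Y : Type*} [Fintype V] [DecidableEq V]

theorem mk_mem_Eqs_iff {f : V → Y} {u w : V} :
    s(u, w) ∈ Eqs f ↔ u ≠ w ∧ f u = f w := by
  simp only [Eqs, mem_filter, mem_univ, true_and, Sym2.eq_iff]
  constructor
  · rintro ⟨a, b, hab, hf, ⟨rfl, rfl⟩ | ⟨rfl, rfl⟩⟩
    exacts [⟨hab, hf⟩, ⟨hab.symm, hf.symm⟩]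
  · exact fun ⟨huw, hf⟩ => ⟨u, w, huw, hf, .inl ⟨rfl, rfl⟩⟩

theorem subset_Eqs_iff {B : Finset (Sym2 V)}
    (hB : ∀ e ∈ B, ¬ e.IsDiag) (f : V → Y) :
    B ⊆ Eqs f ↔ ∀ u w, (SimpleGraph.fromEdgeSet (B : Set (Sym2 V))).Adj u w → f u = f w := by
  simp only [SimpleGraph.fromEdgeSet_adj, mem_coe]
  refine ⟨fun h u w huw => (mk_mem_Eqs_iff.1 (h huw.1)).2, fun h e he => ?_⟩
  induction e using Sym2.ind with
  | h u w =>
    have huw : u ≠ w := fun h => hB _ he (Sym2.mk_isDiag_iff.2 h)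
    exact mk_mem_Eqs_iff.2 ⟨huw, h u w ⟨he, huw⟩⟩

end Eqs

theorem SimpleGraph.exists_comp_connectedComponentMk_iff {V β : Type*} (G : SimpleGraph V)
    (f : V → β) :
    (∃ g : G.ConnectedComponent → β, g ∘ G.connectedComponentMk = f) ↔
      ∀ u w, G.Adj u w → f u = f w := by
  refine ⟨?_, fun h => ⟨Quot.lift f ?_, rfl⟩⟩
  · rintro ⟨g, rfl⟩ u w huw
    exact congrArg g (ConnectedComponent.connectedComponentMk_eq_of_adj huw)
  · rintro u w ⟨p⟩
    induction p with
    | nil => rfl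
    | cons huv _ ih => exact (h _ _ huv).trans ih

theorem colorMonomial_comp {V W : Type*} [Fintype V] [Fintype W] (g : W → ℕ+) (π : V → W) :
    colorMonomial (g ∘ π) = ∑ w, single (g w) (Nat.card {v // π v = w}) := by
  simp only [colorMonomial, Function.comp_apply]
  rw [← Fintype.sum_fiberwise' π fun w => single (g w) 1]
  simp [Nat.card_eq_fintype_card]

theorem ncard_factorsThrough_colorMonomial_eq {V W : Type*} [Fintype V] [Fintype W] {π : V → W}
    (hπ : Function.Surjective π) (d : ℕ+ →₀ ℕ) :
    {f : V → ℕ+ | (∃ g, g ∘ π = f) ∧ colorMonomial f = d}.ncard =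
      {g : W → ℕ+ | ∑ w, single (g w) (Nat.card {v // π v = w}) = d}.ncard := by
  rw [← Set.ncard_image_of_injective _ hπ.injective_comp_right]
  congr 1
  ext f
  simp only [Set.mem_ofPred_eq, Set.mem_image]
  constructor
  · rintro ⟨⟨g, rfl⟩, hd⟩
    exact ⟨g, by rwa [← colorMonomial_comp], rfl⟩
  · rintro ⟨g, hd, rfl⟩
    exact ⟨⟨g, rfl⟩, by rwa [colorMonomial_comp]⟩

theorem coeff_prod_powerSum (k : Type*) [CommRing k] {ι : Type*} [Fintype ι] {n : ι → ℕ}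
    (hn : ∀ i, n i ≠ 0) (d : ℕ+ →₀ ℕ) :
    MvPowerSeries.coeff d (∏ i, powerSum k (n i)) =
      {g : ι → ℕ+ | ∑ i, single (g i) (n i) = d}.ncard := by
  have hcoeff : ∀ i l, MvPowerSeries.coeff l (powerSum k (n i)) =
      if ∃ j, l = single j (n i) then 1 else 0 := fun _ _ => rfl
  simp only [MvPowerSeries.coeff_prod, hcoeff, prod_boole, mem_univ, forall_const]
  rw [sum_boole]
  congr 1
  let φ : (ι → ℕ+) → ι →₀ ℕ+ →₀ ℕ := fun g => equivFunOnFinite.symm fun i => single (g i) (n i)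
  have hφ : Function.Injective φ := fun g g' h => funext fun i =>
    (single_left_inj (hn i)).1 (DFunLike.congr_fun h i)
  rw [← Set.ncard_image_of_injective _ hφ, ← Set.ncard_coe_finset]
  congr 1
  ext l
  simp only [coe_filter, mem_finsuppAntidiag, subset_univ, and_true, Set.mem_ofPred_eq,
    Set.mem_image]
  constructor
  · rintro ⟨hl, hex⟩
    choose g hg using hex
    refine ⟨g, ?_, ?_⟩
    · rw [← hl]; exact sum_congr rfl fun i _ => (hg i).symm
    · ext1 i; exact (hg i).symm
  · rintro ⟨g, hg, rfl⟩
    exact ⟨hg, fun i => ⟨g i, rfl⟩⟩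

/-- For a finite graph `(V, B)`:
`∑_{f : V → ℕ+, B ⊆ Eqs f} x_f = p_{λ(V,B)}`. The left-hand side is the power series
whose coefficient at the monomial with exponent vector `d` is the number of maps
`f : V → ℕ+` with `B ⊆ Eqs f` whose monomial `x_f = ∏_{v ∈ V} x_{f v}` has exponent
vector `d`. -/
theorem sum_over_Eqs_eq_pLambda
    (k : Type*) [CommRing k] {V : Type*} [Fintype V] [DecidableEq V]
    (B : Finset (Sym2 V)) (hB : ∀ e ∈ B, ¬ e.IsDiag) :
    (fun d => (Set.ncard {f : V → ℕ+ | B ⊆ Eqs f ∧ colorMonomial f = d} : k)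
        : MvPowerSeries ℕ+ k) =
      pLambda k B := by
  funext d
  set G := SimpleGraph.fromEdgeSet (B : Set (Sym2 V))
  have hsupp : ∀ c : G.ConnectedComponent, Nat.card c.supp ≠ 0 := fun c =>
    Nat.card_ne_zero.2 ⟨c.nonempty_supp.to_subtype, inferInstance⟩
  calc ({f : V → ℕ+ | B ⊆ Eqs f ∧ colorMonomial f = d}.ncard : k)
      = {f : V → ℕ+ | (∃ g, g ∘ G.connectedComponentMk = f) ∧ colorMonomial f = d}.ncard := by
        simp_rw [subset_Eqs_iff hB, G.exists_comp_connectedComponentMk_iff]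
        rfl
    _ = {g : G.ConnectedComponent → ℕ+ | ∑ c, single (g c) (Nat.card c.supp) = d}.ncard := by
        rw [ncard_factorsThrough_colorMonomial_eq (π := G.connectedComponentMk) Quot.mk_surjective]
        rfl
    _ = MvPowerSeries.coeff d (∏ c : G.ConnectedComponent, powerSum k (Nat.card c.supp)) :=
        (coeff_prod_powerSum k hsupp d).symm
    _ = pLambda k B d := by
        rw [pLambda, finprod_eq_prod_of_fintype]
        rfl
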